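/- In the regular martingale setting (E_j f ≤ c E_{j−1} f for all f ≥ 0), the good part g = qfq + ∑_j p_j E_j(f) p_j of the Calderón–Zygmund decomposition at height λ satisfies ‖g‖₁ ≤ ‖f‖₁ and ‖g‖_∞ ≤ c λ. -/

import Mathlib

/-!
The projections `q_N` and `p_j = q_{j-1} - q_j` (`j ≤ N`) are mutually orthogonal, sum to `1`, and
`p_j` is fixed by `E_j`; hence `tr (p_j E_j(f) p_j) = tr (E_j (f p_j)) = tr (f p_j)` and
`tr g = tr f`, which is `‖g‖₁ = ‖f‖₁` as `f, g ≥ 0`. The bound `g ≤ cλ` is checked on each piece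
of the same partition of unity: regularity and the Cuculescu condition `q_{j-1} E_{j-1}(f) q_{j-1}
≤ λ q_{j-1}` give `p_j E_j(f) p_j ≤ c p_j E_{j-1}(f) p_j ≤ cλ p_j`, and on `q_N` one has
`q_N f q_N ≤ λ q_N ≤ cλ q_N`, since regularity applied to `1 = E_j 1` forces `c ≥ 1`.
-/

open Matrix
open scoped ComplexOrder

/-- The trace norm `‖A‖₁ = tr √(AᴴA)` of a complex matrix. -/
noncomputable def traceNorm {m : ℕ} (A : Matrix (Fin m) (Fin m) ℂ) : ℝ :=
  (((Matrix.posSemidef_conjTranspose_mul_self A).1.eigenvectorUnitary.1 *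
      diagonal (((↑) : ℝ → ℂ) ∘ (√·) ∘ (Matrix.posSemidef_conjTranspose_mul_self A).1.eigenvalues) *
      (star (Matrix.posSemidef_conjTranspose_mul_self A).1.eigenvectorUnitary :
        Matrix (Fin m) (Fin m) ℂ)).trace).re

open Finset

lemma traceNorm_eq_re_trace {m : ℕ} {A : Matrix (Fin m) (Fin m) ℂ} (hA : A.PosSemidef) :
    traceNorm A = A.trace.re := by
  open scoped MatrixOrder in
  have hcfc : traceNorm A = (cfc Real.sqrt (Aᴴ * A)).trace.re := by
    rw [(posSemidef_conjTranspose_mul_self A).1.cfc_eq]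
    rfl
  have hsqrt := CFC.sqrt_eq_real_sqrt (A * A)
    (by simpa [hA.1.eq] using (posSemidef_conjTranspose_mul_self A).nonneg)
  rw [CFC.sqrt_mul_self A hA.nonneg, cfcₙ_eq_cfc (hf0 := Real.sqrt_zero)] at hsqrt
  rw [hcfc, hA.1.eq, ← hsqrt]

lemma LinearMap.apply_eq_self_of_le {ι R M : Type*} [LinearOrder ι] [Semiring R]
    [AddCommMonoid M] [Module R M] {E : ι → M →ₗ[R] M}
    (htower : ∀ j k, (E j).comp (E k) = E (min j k)) {j k : ι} (hkj : k ≤ j) {x : M}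
    (hx : E k x = x) : E j x = x := by
  simpa [min_eq_right hkj, hx] using LinearMap.congr_fun (htower j k) x

namespace Matrix

variable {n R : Type*} [Fintype n] [CommRing R]

lemma trace_mul_apply_mul_of_idempotent {Φ : Matrix n n R → Matrix n n R} {p x : Matrix n n R}
    (hp : IsIdempotentElem p) (htr : ∀ y, (Φ y).trace = y.trace) (hΦ : Φ (x * p) = Φ x * p) :
    (p * Φ x * p).trace = (x * p).trace := by
  rw [trace_mul_cycle, hp.eq, trace_mul_comm, ← hΦ, htr]

variable [PartialOrder R] [StarRing R]

lemma PosSemidef.mul_mul_of_isHermitian {A P : Matrix n n R} (hA : A.PosSemidef)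
    (hP : P.IsHermitian) : (P * A * P).PosSemidef := by
  simpa [hP.eq] using hA.conjTranspose_mul_mul_same P

variable [StarOrderedRing R]

lemma PosSemidef.smul_sub_mul_mul_of_le {p q A B : Matrix n n R} {c l : R}
    (hp : p.IsHermitian) (hpp : IsIdempotentElem p) (hpq : p * q = p) (hqp : q * p = p)
    (hc : 0 ≤ c) (hA : (l • q - q * A * q).PosSemidef) (hAB : (c • A - B).PosSemidef) :
    ((c * l) • p - p * B * p).PosSemidef := by
  have hpAp : p * (l • q - q * A * q) * p = l • p - p * A * p := by
    simp only [mul_sub, sub_mul, mul_smul_comm, smul_mul_assoc, ← mul_assoc, hpq, hpp.eq]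
    simp only [mul_assoc, hqp]
  have key : (c * l) • p - p * B * p = c • (p * (l • q - q * A * q) * p) + p * (c • A - B) * p := by
    rw [hpAp]
    simp only [mul_sub, sub_mul, mul_smul_comm, smul_mul_assoc, smul_sub, smul_smul]
    abel
  rw [key]
  exact ((hA.mul_mul_of_isHermitian hp).smul hc).add (hAB.mul_mul_of_isHermitian hp)

lemma PosSemidef.smul_sub_mul_mul_of_one_le [DecidableEq n] {q X : Matrix n n R} {c l : R}
    (hq : q.IsHermitian) (hqq : IsIdempotentElem q) (hc : (c • 1 - 1 : Matrix n n R).PosSemidef)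
    (hl : 0 ≤ l) (h : (l • q - q * X * q).PosSemidef) : ((c * l) • q - q * X * q).PosSemidef := by
  have key : (c * l) • q - q * X * q = l • (q * (c • 1 - 1) * q) + (l • q - q * X * q) := by
    simp only [mul_sub, sub_mul, mul_smul_comm, smul_mul_assoc, mul_one, hqq.eq, smul_sub,
      smul_smul, mul_comm l c]
    abel
  rw [key]
  exact ((hc.mul_mul_of_isHermitian hq).smul hl).add h

end Matrix

section GoodPart

variable {n R : Type*} [Fintype n] [CommRing R]

/-- Summand `j` is the paper's `p_{j+1} E_{j+1}(f) p_{j+1}` with `p_{j+1} = q_j - q_{j+1}`, and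
`q N` stands in for `q = ⋀ q_j`. -/
def goodPart (E : ℕ → Matrix n n R →ₗ[R] Matrix n n R) (q : ℕ → Matrix n n R) (f : Matrix n n R)
    (N : ℕ) : Matrix n n R :=
  q N * f * q N + ∑ j ∈ range N, (q j - q (j + 1)) * E (j + 1) f * (q j - q (j + 1))

variable {E : ℕ → Matrix n n R →ₗ[R] Matrix n n R} {q : ℕ → Matrix n n R} {f : Matrix n n R}
  {N : ℕ}

lemma trace_goodPart [DecidableEq n] (hq0 : q 0 = 1) (hq : ∀ j, IsIdempotentElem (q j))
    (hqdec : ∀ j, q (j + 1) * q j = q (j + 1) ∧ q j * q (j + 1) = q (j + 1))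
    (htr : ∀ j x, (E j x).trace = x.trace)
    (hE : ∀ j x, E (j + 1) (x * (q j - q (j + 1))) = E (j + 1) x * (q j - q (j + 1))) :
    (goodPart E q f N).trace = f.trace := by
  have hp j : IsIdempotentElem (q j - q (j + 1)) :=
    (hq (j + 1)).sub (hq j) (hqdec j).1 (hqdec j).2
  calc (goodPart E q f N).trace
      = (f * q N).trace + ∑ j ∈ range N, (f * (q j - q (j + 1))).trace := by
        rw [goodPart, trace_add, trace_sum, trace_mul_cycle, (hq N).eq, trace_mul_comm]
        exact congrArg _ (sum_congr rfl fun j _ =>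
          trace_mul_apply_mul_of_idempotent (hp j) (htr _) (hE j f))
    _ = (f * (q N + ∑ j ∈ range N, (q j - q (j + 1)))).trace := by
        rw [mul_add, mul_sum, trace_add, trace_sum]
    _ = f.trace := by rw [sum_range_sub', hq0, add_sub_cancel, mul_one]

variable [PartialOrder R] [StarRing R] [StarOrderedRing R]

lemma posSemidef_goodPart (hf : f.PosSemidef) (hE : ∀ j, (E j f).PosSemidef)
    (hq : ∀ j, (q j).IsHermitian) : (goodPart E q f N).PosSemidef :=
  (hf.mul_mul_of_isHermitian (hq N)).add <| posSemidef_sum _ fun j _ =>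
    (hE _).mul_mul_of_isHermitian ((hq j).sub (hq (j + 1)))

lemma posSemidef_smul_one_sub_goodPart [DecidableEq n] {c l : R} (hc : 0 ≤ c) (hl : 0 ≤ l)
    (hq0 : q 0 = 1)
    (hq : ∀ j, (q j).IsHermitian ∧ IsIdempotentElem (q j))
    (hqdec : ∀ j, q (j + 1) * q j = q (j + 1) ∧ q j * q (j + 1) = q (j + 1))
    (hlevel : ∀ j, (l • q j - q j * E j f * q j).PosSemidef)
    (hreg : ∀ j, (c • E j f - E (j + 1) f).PosSemidef)
    (hc1 : (c • 1 - 1 : Matrix n n R).PosSemidef) (hqf : (l • q N - q N * f * q N).PosSemidef) :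
    ((c * l) • 1 - goodPart E q f N).PosSemidef := by
  have hone : (1 : Matrix n n R) = q N + ∑ j ∈ range N, (q j - q (j + 1)) := by
    rw [sum_range_sub', hq0, add_sub_cancel]
  have hsplit : (c * l) • 1 - goodPart E q f N = ((c * l) • q N - q N * f * q N) +
      ∑ j ∈ range N, ((c * l) • (q j - q (j + 1)) -
        (q j - q (j + 1)) * E (j + 1) f * (q j - q (j + 1))) := by
    rw [hone, goodPart, smul_add, smul_sum, sum_sub_distrib]
    abel
  rw [hsplit]
  refine ((PosSemidef.smul_sub_mul_mul_of_one_le (hq N).1 (hq N).2 hc1 hl hqf)).add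
    (posSemidef_sum _ fun j _ => ?_)
  refine PosSemidef.smul_sub_mul_mul_of_le ((hq j).1.sub (hq (j + 1)).1)
    ((hq (j + 1)).2.sub (hq j).2 (hqdec j).1 (hqdec j).2) ?_ ?_ hc (hlevel j) (hreg j)
  · rw [sub_mul, (hq j).2.eq, (hqdec j).1]
  · rw [mul_sub, (hq j).2.eq, (hqdec j).2]

end GoodPart

theorem cz_good_part_regular_general {m : ℕ}
    (E : ℕ → Matrix (Fin m) (Fin m) ℂ →ₗ[ℂ] Matrix (Fin m) (Fin m) ℂ)
    (htower : ∀ j k, (E j).comp (E k) = E (min j k))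
    (hpos : ∀ j x, x.PosSemidef → (E j x).PosSemidef)
    (htr : ∀ j x, (E j x).trace = x.trace)
    (hbimod : ∀ j (a b x : Matrix (Fin m) (Fin m) ℂ),
        E j a = a → E j b = b → E j (a * x * b) = a * E j x * b)
    (c : ℝ) (hc : 0 < c)
    (hreg : ∀ j x, x.PosSemidef → ((c : ℂ) • E j x - E (j + 1) x).PosSemidef)
    (f : Matrix (Fin m) (Fin m) ℂ) (hf : f.PosSemidef)
    (lam : ℝ) (hlam : 0 < lam)
    (q : ℕ → Matrix (Fin m) (Fin m) ℂ)
    (hq0 : q 0 = 1)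
    (hqmem : ∀ j, E j (q j) = q j)
    (hqproj : ∀ j, (q j)ᴴ = q j ∧ q j * q j = q j)
    (hqdec : ∀ j, q (j + 1) * q j = q (j + 1) ∧ q j * q (j + 1) = q (j + 1))
    (hqlevel : ∀ j, ((lam : ℂ) • q j - q j * E j f * q j).PosSemidef)
    (N : ℕ)
    (hqf : ((lam : ℂ) • q N - q N * f * q N).PosSemidef) :
    letI g : Matrix (Fin m) (Fin m) ℂ :=
      q N * f * q N
        + ∑ j ∈ Finset.range N, (q j - q (j + 1)) * E (j + 1) f * (q j - q (j + 1))
    traceNorm g ≤ traceNorm f ∧ g.PosSemidef ∧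
      (((c * lam : ℝ) : ℂ) • (1 : Matrix (Fin m) (Fin m) ℂ) - g).PosSemidef := by
  have hE1 j : E j 1 = 1 := LinearMap.apply_eq_self_of_le htower j.zero_le (hq0 ▸ hqmem 0)
  have hEp j x : E (j + 1) (x * (q j - q (j + 1))) = E (j + 1) x * (q j - q (j + 1)) := by
    have hp : E (j + 1) (q j - q (j + 1)) = q j - q (j + 1) := by
      rw [map_sub, LinearMap.apply_eq_self_of_le htower j.le_succ (hqmem j), hqmem]
    simpa using hbimod (j + 1) 1 _ x (hE1 _) hp
  have hc1 : ((c : ℂ) • 1 - 1 : Matrix (Fin m) (Fin m) ℂ).PosSemidef := by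
    simpa [hE1] using hreg 0 1 .one
  have hg : (goodPart E q f N).PosSemidef :=
    posSemidef_goodPart hf (fun j => hpos j f hf) (fun j => (hqproj j).1)
  change traceNorm (goodPart E q f N) ≤ traceNorm f ∧ (goodPart E q f N).PosSemidef ∧
    (((c * lam : ℝ) : ℂ) • 1 - goodPart E q f N).PosSemidef
  refine ⟨?_, hg, ?_⟩
  · rw [traceNorm_eq_re_trace hg, traceNorm_eq_re_trace hf,
      trace_goodPart hq0 (fun j => (hqproj j).2) hqdec htr hEp]
  · rw [Complex.ofReal_mul]
    exact posSemidef_smul_one_sub_goodPart (Complex.zero_le_real.2 hc.le)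
      (Complex.zero_le_real.2 hlam.le) hq0 hqproj hqdec hqlevel (fun j => hreg j f hf) hc1 hqf

/-- In the regular martingale setting (`E_{j+1} x ≤ c E_j x` for `x ≥ 0`), the good part
`g = qfq + ∑_j p_j E_j(f) p_j` of the Calderón–Zygmund decomposition at height `λ`
satisfies `‖g‖₁ ≤ ‖f‖₁` and `0 ≤ g ≤ cλ·1` (i.e. `‖g‖_∞ ≤ cλ`). -/
theorem cz_good_part_regular {m : ℕ}
    (E : ℕ → Matrix (Fin m) (Fin m) ℂ →ₗ[ℂ] Matrix (Fin m) (Fin m) ℂ)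
    (hidem : ∀ j, (E j).comp (E j) = E j)
    (htower : ∀ j k, (E j).comp (E k) = E (min j k))
    (hpos : ∀ j x, x.PosSemidef → (E j x).PosSemidef)
    (htr : ∀ j x, (E j x).trace = x.trace)
    (hbimod : ∀ j (a b x : Matrix (Fin m) (Fin m) ℂ),
        E j a = a → E j b = b → E j (a * x * b) = a * E j x * b)
    (c : ℝ) (hc : 0 < c)
    (hreg : ∀ j x, x.PosSemidef → ((c : ℂ) • E j x - E (j + 1) x).PosSemidef)
    (f : Matrix (Fin m) (Fin m) ℂ) (hf : f.PosSemidef)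
    (lam : ℝ) (hlam : 0 < lam)
    (q : ℕ → Matrix (Fin m) (Fin m) ℂ)
    (hq0 : q 0 = 1)
    (hqmem : ∀ j, E j (q j) = q j)
    (hqproj : ∀ j, (q j)ᴴ = q j ∧ q j * q j = q j)
    (hqdec : ∀ j, q (j + 1) * q j = q (j + 1) ∧ q j * q (j + 1) = q (j + 1))
    (hqlevel : ∀ j, ((lam : ℂ) • q j - q j * E j f * q j).PosSemidef)
    (hqcomm : ∀ j,
        q (j + 1) * (q j * E (j + 1) f * q j) = (q j * E (j + 1) f * q j) * q (j + 1))
    (N : ℕ) (hstab : ∀ j, N ≤ j → q j = q N)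
    (hqf : ((lam : ℂ) • q N - q N * f * q N).PosSemidef) :
    letI g : Matrix (Fin m) (Fin m) ℂ :=
      q N * f * q N
        + ∑ j ∈ Finset.range N, (q j - q (j + 1)) * E (j + 1) f * (q j - q (j + 1))
    traceNorm g ≤ traceNorm f ∧ g.PosSemidef ∧
      (((c * lam : ℝ) : ℂ) • (1 : Matrix (Fin m) (Fin m) ℂ) - g).PosSemidef :=
  cz_good_part_regular_general E htower hpos htr hbimod c hc hreg f hf lam hlam q hq0 hqmem hqproj
    hqdec hqlevel N hqf
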